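/- arXiv:math/0406382 — 2 statements merged into one kernel-verified Lean document; each statement's English description precedes it below -/
import Mathlib

section
/- A free product of two locally indicable groups is locally indicable. -/
/-!
Let `S ≤ G ∗ H` be nontrivial and finitely generated. If `S` has nontrivial image in `G` or in
`H`, local indicability of that factor gives the map onto `ℤ`. Otherwise `S` lies in the kernel
of `G ∗ H → G × H`. This kernel is generated by the commutators `⁅g, h⁆`, and by ping-pong on
reduced words those with `g, h ≠ 1` form a free basis of it. So `S` is a nontrivial subgroup of
a free group, hence free by Nielsen–Schreier, and it maps onto `ℤ`. Ping-pong needs at least two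
basis elements; they exist because locally indicable groups are torsion-free.
-/

/-- A group is locally indicable if every nontrivial finitely generated subgroup
admits a surjective homomorphism onto the infinite cyclic group. -/
def LocallyIndicable (G : Type*) [Group G] : Prop :=
  ∀ S : Subgroup G, S ≠ ⊥ → S.FG →
    ∃ f : S →* Multiplicative ℤ, Function.Surjective f

open scoped commutatorElement

theorem LocallyIndicable.eq_one_of_pow_eq_one {G : Type*} [Group G] (hG : LocallyIndicable G)
    {g : G} {n : ℕ} (hn : n ≠ 0) (hgn : g ^ n = 1) : g = 1 := by
  by_contra hg
  obtain ⟨f, hf⟩ := hG (Subgroup.zpowers g) (by simpa using hg)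
    ⟨{g}, by simp [Subgroup.zpowers_eq_closure]⟩
  have : Finite (Subgroup.zpowers g) :=
    (isOfFinOrder_iff_pow_eq_one.2 ⟨n, n.pos_of_ne_zero hn, hgn⟩).finite_zpowers.to_subtype
  have := Finite.of_surjective f hf
  exact not_finite (Multiplicative ℤ)

theorem LocallyIndicable.exists_surjective_of_map_ne_bot {G K : Type*} [Group G] [Group K]
    (hK : LocallyIndicable K) (f : G →* K) {S : Subgroup G} (hS : S.map f ≠ ⊥) (hfg : S.FG) :
    ∃ φ : S →* Multiplicative ℤ, Function.Surjective φ := by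
  have : Group.FG S := (Group.fg_iff_subgroup_fg S).mpr hfg
  have : Group.FG (S.map f) := Group.fg_of_surjective (f.subgroupMap_surjective S)
  obtain ⟨φ, hφ⟩ := hK _ hS ((Group.fg_iff_subgroup_fg _).mp this)
  exact ⟨φ.comp (f.subgroupMap S), hφ.comp (f.subgroupMap_surjective S)⟩

universe u v

namespace Monoid.CoprodI.Word

variable {ι : Type*} {M : ι → Type*} [∀ i, Group (M i)]

theorem fstIdx_of_toList_eq_cons {w : Word M} {l : Σ i, M i} {t : List (Σ i, M i)}
    (h : w.toList = l :: t) : w.fstIdx = some l.1 := by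
  simp [fstIdx, h]

def startsWith (l₁ l₂ : Σ i, M i) : Set (Word M) :=
  {w | ∃ t, w.toList = l₁ :: l₂ :: t}

theorem disjoint_startsWith {l₁ l₂ l₁' l₂' : Σ i, M i} (h : (l₁, l₂) ≠ (l₁', l₂')) :
    Disjoint (startsWith l₁ l₂) (startsWith l₁' l₂') := by
  rw [Set.disjoint_left]
  rintro w ⟨t, ht⟩ ⟨t', ht'⟩
  rw [ht, List.cons_eq_cons, List.cons_eq_cons] at ht'
  exact h (Prod.ext ht'.1 ht'.2.1)

variable [DecidableEq ι] [∀ i, DecidableEq (M i)]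

theorem toList_of_smul_of_fstIdx_ne {i : ι} {m : M i} (hm : m ≠ 1) {w : Word M}
    (hw : w.fstIdx ≠ some i) : (of m • w).toList = ⟨i, m⟩ :: w.toList := by
  rw [← cons_eq_smul (h1 := hw) (h2 := hm), cons_toList]

theorem toList_eq_cons_of_fstIdx_of_smul_ne {i : ι} {m : M i} (hm : m ≠ 1) {w : Word M}
    (hw : (of m • w).fstIdx ≠ some i) : w.toList = ⟨i, m⁻¹⟩ :: (of m • w).toList := by
  rw [← toList_of_smul_of_fstIdx_ne (inv_ne_one.2 hm) hw, ← mul_smul, ← map_mul, inv_mul_cancel,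
    map_one, one_smul]

theorem commutatorElement_smul_mem_startsWith {i j : ι} (hij : i ≠ j) {x : M i} {y : M j}
    (hx : x ≠ 1) (hy : y ≠ 1) {w : Word M} (hw : w ∉ startsWith ⟨j, y⟩ ⟨i, x⟩) :
    ⁅of x, of y⁆ • w ∈ startsWith ⟨i, x⟩ ⟨j, y⟩ := by
  set u := of x⁻¹ • of y⁻¹ • w with hu_def
  -- if `u` began with a `j`-letter, both `x⁻¹` and `y⁻¹` would have cancelled against `w`
  have hu : u.fstIdx ≠ some j := by
    intro hu
    have hv := toList_eq_cons_of_fstIdx_of_smul_ne (inv_ne_one.2 hx) (w := of y⁻¹ • w)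
      (by rw [hu]; simpa using hij.symm)
    have hw' := toList_eq_cons_of_fstIdx_of_smul_ne (inv_ne_one.2 hy) (w := w)
      (by rw [fstIdx_of_toList_eq_cons hv]; simpa using hij)
    rw [hv, inv_inv, inv_inv] at hw'
    exact hw ⟨_, hw'⟩
  have hyu := toList_of_smul_of_fstIdx_ne hy hu
  refine ⟨u.toList, ?_⟩
  rw [commutatorElement_def, mul_smul, mul_smul, mul_smul, ← map_inv, ← map_inv, ← hu_def,
    toList_of_smul_of_fstIdx_ne hx (by rw [fstIdx_of_toList_eq_cons hyu]; simpa using hij.symm),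
    hyu]

end Monoid.CoprodI.Word

namespace Monoid.CoprodI

open Word

variable {ι : Type u} {M : ι → Type v} [∀ i, Group (M i)]

theorem injective_lift_commutatorElement {κ : Type (max u v)} [Nontrivial κ] {i j : ι}
    (hij : i ≠ j) {x : κ → M i} {y : κ → M j} (hx : ∀ k, x k ≠ 1) (hy : ∀ k, y k ≠ 1)
    (hxy : Function.Injective fun k => (x k, y k)) :
    Function.Injective (FreeGroup.lift fun k => ⁅of (x k), of (y k)⁆) := by
  classical
  have hne {k l : κ} (hkl : k ≠ l) (h : x k = x l) : y k ≠ y l :=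
    fun h' => hkl (hxy (Prod.ext h h'))
  refine FreeGroup.injective_lift_of_ping_pong _ (fun k => startsWith ⟨i, x k⟩ ⟨j, y k⟩)
    (fun k => startsWith ⟨j, y k⟩ ⟨i, x k⟩) (fun k => ?_) (fun k l hkl => ?_) (fun k l hkl => ?_)
    (fun k l => ?_) (fun k => ?_) (fun k => ?_)
  · exact ⟨cons (x k) (cons (y k) empty (by simp [fstIdx]) (hy k))
      (by simp [fstIdx, hij.symm]) (hx k), [], rfl⟩
  · exact disjoint_startsWith (by simpa using hne hkl)
  · exact disjoint_startsWith (by simpa using fun h h' => hne hkl h' h)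
  · exact disjoint_startsWith (by simp [hij])
  · rintro _ ⟨w, hw, rfl⟩
    exact commutatorElement_smul_mem_startsWith hij (hx k) (hy k) hw
  · rintro _ ⟨w, hw, rfl⟩
    rw [Pi.inv_apply, commutatorElement_inv]
    exact commutatorElement_smul_mem_startsWith hij.symm (hy k) (hx k) hw

end Monoid.CoprodI

theorem IsFreeGroup.exists_surjective_multiplicative_int (F : Type*) [Group F] [IsFreeGroup F]
    [Nontrivial F] : ∃ f : F →* Multiplicative ℤ, Function.Surjective f := by
  classical
  obtain ⟨i⟩ : Nonempty (Generators F) := by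
    by_contra h
    rw [not_nonempty_iff] at h
    exact not_subsingleton F (toFreeGroup F).toEquiv.subsingleton
  refine ⟨lift (Pi.mulSingle i (Multiplicative.ofAdd 1)), fun z => ⟨of i ^ z.toAdd, ?_⟩⟩
  rw [map_zpow, lift_of, Pi.mulSingle_eq_same, ← ofAdd_zsmul, smul_eq_mul, mul_one, ofAdd_toAdd]

theorem IsFreeGroup.exists_surjective_of_le_range {F A : Type*} [Group F] [IsFreeGroup F]
    [Group A] {φ : F →* A} (hφ : Function.Injective φ) {S : Subgroup A} (hS : S ≠ ⊥)
    (hle : S ≤ φ.range) : ∃ f : S →* Multiplicative ℤ, Function.Surjective f := by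
  let e : S.comap φ ≃* S :=
    ((S.comap φ).equivMapOfInjective φ hφ).trans (MulEquiv.subgroupCongr (S.map_comap_eq_self hle))
  have : Nontrivial S := (Subgroup.nontrivial_iff_ne_bot S).mpr hS
  have : Nontrivial (S.comap φ) := e.toEquiv.nontrivial
  obtain ⟨f, hf⟩ := exists_surjective_multiplicative_int (S.comap φ)
  exact ⟨f.comp e.symm.toMonoidHom, hf.comp e.symm.surjective⟩

namespace Monoid.Coprod

open Subgroup

variable {G : Type u} {H : Type v} [Group G] [Group H]

variable (G H) in
def inlInrCommutators : Set (G ∗ H) :=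
  Set.range fun p : G × H => ⁅(inl : G →* G ∗ H) p.1, inr p.2⁆

theorem closure_inlInrCommutators_normal :
    (closure (inlInrCommutators G H)).Normal := by
  rw [← normalizer_eq_top_iff, eq_top_iff, ← range_inl_sup_range_inr, sup_le_iff,
    le_normalizer_closure_iff, le_normalizer_closure_iff]
  refine ⟨?_, ?_⟩ <;> rintro _ ⟨a, rfl⟩ _ ⟨⟨g, h⟩, rfl⟩
  · have key (a g k : G ∗ H) : a * ⁅g, k⁆ * a⁻¹ = ⁅a * g, k⁆ * ⁅a, k⁆⁻¹ := by
      simp only [commutatorElement_def]; group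
    rw [key, ← map_mul]
    exact mul_mem (subset_closure ⟨(a * g, h), rfl⟩) (inv_mem (subset_closure ⟨(a, h), rfl⟩))
  · have key (b g k : G ∗ H) : b * ⁅g, k⁆ * b⁻¹ = ⁅g, b⁆⁻¹ * ⁅g, b * k⁆ := by
      simp only [commutatorElement_def]; group
    rw [key, ← map_mul]
    exact mul_mem (inv_mem (subset_closure ⟨(g, a), rfl⟩)) (subset_closure ⟨(g, a * h), rfl⟩)

theorem ker_toProd_le_closure_inlInrCommutators :
    (toProd : G ∗ H →* G × H).ker ≤ closure (inlInrCommutators G H) := by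
  set C := closure (inlInrCommutators G H)
  have := closure_inlInrCommutators_normal (G := G) (H := H)
  -- modulo `C` the images of `G` and `H` commute, so the quotient map factors through `G × H`
  let φ : G × H →* (G ∗ H) ⧸ C :=
    MonoidHom.noncommCoprod ((QuotientGroup.mk' C).comp inl) ((QuotientGroup.mk' C).comp inr)
      fun g h => by
        rw [← commutatorElement_eq_one_iff_commute, MonoidHom.comp_apply, MonoidHom.comp_apply,
          ← map_commutatorElement, QuotientGroup.mk'_apply, QuotientGroup.eq_one_iff]
        exact subset_closure ⟨(g, h), rfl⟩
  have hφ : φ.comp toProd = QuotientGroup.mk' C := hom_ext (by ext; simp [φ]) (by ext; simp [φ])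
  intro x hx
  rw [← QuotientGroup.eq_one_iff, ← QuotientGroup.mk'_apply, ← hφ, MonoidHom.comp_apply,
    MonoidHom.mem_ker.mp hx, map_one]

-- Normal forms of reduced words exist in Mathlib only for `CoprodI`, over a family in one universe.
variable (G H) in
abbrev Factors : Bool → Type (max u v) := fun b => cond b (ULift.{v} G) (ULift.{u} H)

instance : ∀ b, Group (Factors G H b)
  | true => ULift.group
  | false => ULift.group

def toCoprodI : G ∗ H →* CoprodI (Factors G H) :=
  lift ((CoprodI.of (i := true)).comp MulEquiv.ulift.symm.toMonoidHom)
    ((CoprodI.of (i := false)).comp MulEquiv.ulift.symm.toMonoidHom)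

def inlInrCommutator (p : {g : G // g ≠ 1} × {h : H // h ≠ 1}) : G ∗ H :=
  ⁅(inl : G →* G ∗ H) p.1, inr p.2⁆

theorem injective_lift_inlInrCommutator [Nontrivial ({g : G // g ≠ 1} × {h : H // h ≠ 1})] :
    Function.Injective (FreeGroup.lift (inlInrCommutator (G := G) (H := H))) := by
  let x (p : {g : G // g ≠ 1} × {h : H // h ≠ 1}) : Factors G H true := ULift.up p.1.1
  let y (p : {g : G // g ≠ 1} × {h : H // h ≠ 1}) : Factors G H false := ULift.up p.2.1
  have hcomp : toCoprodI.comp (FreeGroup.lift (inlInrCommutator (G := G) (H := H))) =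
      FreeGroup.lift fun p => ⁅CoprodI.of (x p), CoprodI.of (y p)⁆ :=
    FreeGroup.ext_hom _ _ fun p => by
      simp only [MonoidHom.comp_apply, FreeGroup.lift_apply_of, inlInrCommutator,
        map_commutatorElement]
      rfl
  refine Function.Injective.of_comp (f := toCoprodI) ?_
  rw [← MonoidHom.coe_comp, hcomp]
  refine CoprodI.injective_lift_commutatorElement (by decide : true ≠ false) (fun p => ?_)
    (fun p => ?_) ?_
  · exact fun h => p.1.2 (congrArg ULift.down h)
  · exact fun h => p.2.2 (congrArg ULift.down h)
  · rintro ⟨⟨g, _⟩, ⟨h, _⟩⟩ ⟨⟨g', _⟩, ⟨h', _⟩⟩ he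
    simp only [Prod.mk.injEq] at he
    simp only [Prod.mk.injEq, Subtype.mk.injEq]
    exact ⟨congrArg ULift.down he.1, congrArg ULift.down he.2⟩

theorem ker_toProd_le_range_lift_inlInrCommutator :
    (toProd : G ∗ H →* G × H).ker ≤
      (FreeGroup.lift (inlInrCommutator (G := G) (H := H))).range := by
  refine ker_toProd_le_closure_inlInrCommutators.trans ?_
  rw [FreeGroup.range_lift_eq_closure, Subgroup.closure_le]
  rintro _ ⟨⟨g, h⟩, rfl⟩
  by_cases hg : g = 1
  · simp [hg]
  by_cases hh : h = 1
  · simp [hh]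
  exact Subgroup.subset_closure ⟨(⟨g, hg⟩, ⟨h, hh⟩), rfl⟩

theorem exists_surjective_of_le_ker_toProd (hG : ∀ g : G, g ^ 2 = 1 → g = 1)
    {S : Subgroup (G ∗ H)} (hS : S ≠ ⊥) (hle : S ≤ toProd.ker) :
    ∃ f : S →* Multiplicative ℤ, Function.Surjective f := by
  have hle' := hle.trans ker_toProd_le_range_lift_inlInrCommutator
  obtain ⟨⟨⟨g, hg⟩, ⟨h, hh⟩⟩⟩ : Nonempty ({g : G // g ≠ 1} × {h : H // h ≠ 1}) := by
    by_contra hκ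
    rw [not_nonempty_iff] at hκ
    rw [FreeGroup.range_lift_eq_closure, Set.range_eq_empty, Subgroup.closure_empty,
      le_bot_iff] at hle'
    exact hS hle'
  -- ping-pong needs a second basis element
  have : Nontrivial ({g : G // g ≠ 1} × {h : H // h ≠ 1}) :=
    ⟨⟨(⟨g, hg⟩, ⟨h, hh⟩), (⟨g ^ 2, mt (hG g) hg⟩, ⟨h, hh⟩), by simpa [pow_two] using hg⟩⟩
  exact IsFreeGroup.exists_surjective_of_le_range injective_lift_inlInrCommutator hS hle'

end Monoid.Coprod

/-- A free product of two locally indicable groups is locally indicable. -/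
theorem coprod_locallyIndicable {G H : Type*} [Group G] [Group H]
    (hG : LocallyIndicable G) (hH : LocallyIndicable H) :
    LocallyIndicable (Monoid.Coprod G H) := by
  intro S hS hfg
  by_cases h₁ : S.map Monoid.Coprod.fst = ⊥
  · by_cases h₂ : S.map Monoid.Coprod.snd = ⊥
    · refine Monoid.Coprod.exists_surjective_of_le_ker_toProd
        (fun g => hG.eq_one_of_pow_eq_one two_ne_zero) hS ?_
      rw [← Monoid.Coprod.fst_prod_snd, MonoidHom.ker_prod]
      exact le_inf ((Subgroup.map_eq_bot_iff S).mp h₁) ((Subgroup.map_eq_bot_iff S).mp h₂)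
    · exact hH.exists_surjective_of_map_ne_bot Monoid.Coprod.snd h₂ hfg
  · exact hG.exists_surjective_of_map_ne_bot Monoid.Coprod.fst h₁ hfg
end

section
/- Every locally indicable group has the unique product property. -/
private lemma uniqueMul_transfer {G : Type*} [Group G] [DecidableEq G] (X Y : Finset G) (a b x y : G)
    (h : UniqueMul (X.image (a * ·)) (Y.image (· * b)) (a * x) (y * b)) :
    UniqueMul X Y x y := by
  classical
  intro x' y' hx' hy' he
  have h2 : (a * x') * (y' * b) = (a * x) * (y * b) := by
    rw [mul_assoc a x', ← mul_assoc x', he, mul_assoc x, ← mul_assoc a x]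
  obtain ⟨h3, h4⟩ := h (Finset.mem_image_of_mem _ hx') (Finset.mem_image_of_mem _ hy') h2
  exact ⟨mul_left_cancel h3, mul_right_cancel h4⟩

private lemma key {G : Type*} [Group G] (hG : LocallyIndicable G) :
    ∀ n : ℕ, ∀ X Y : Finset G, X.Nonempty → Y.Nonempty → X.card + Y.card ≤ n →
      ∃ x ∈ X, ∃ y ∈ Y, UniqueMul X Y x y := by
  classical
  intro n
  induction n using Nat.strong_induction_on with
  | _ n ih =>
  intro X Y hX hY hcard
  obtain ⟨x₀, hx₀⟩ := hX
  obtain ⟨y₀, hy₀⟩ := hY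
  by_cases htriv : (∀ x ∈ X, x = x₀) ∧ (∀ y ∈ Y, y = y₀)
  · exact ⟨x₀, hx₀, y₀, hy₀, fun x y hx hy _ => ⟨htriv.1 x hx, htriv.2 y hy⟩⟩
  -- translate so that 1 ∈ X₁ and 1 ∈ Y₁
  set X₁ : Finset G := X.image (x₀⁻¹ * ·) with hX₁def
  set Y₁ : Finset G := Y.image (· * y₀⁻¹) with hY₁def
  have hXcard : X₁.card = X.card :=
    Finset.card_image_of_injective _ (mul_right_injective x₀⁻¹)
  have hYcard : Y₁.card = Y.card :=
    Finset.card_image_of_injective _ (mul_left_injective y₀⁻¹)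
  have h1X : (1 : G) ∈ X₁ := by
    refine Finset.mem_image.mpr ⟨x₀, hx₀, ?_⟩; group
  have h1Y : (1 : G) ∈ Y₁ := by
    refine Finset.mem_image.mpr ⟨y₀, hy₀, ?_⟩; group
  -- there is a nontrivial element among the translated generators
  have hnt : ∃ g ∈ X₁ ∪ Y₁, g ≠ 1 := by
    rcases not_and_or.mp htriv with h | h
    · push_neg at h
      obtain ⟨x, hx, hxne⟩ := h
      refine ⟨x₀⁻¹ * x, Finset.mem_union_left _ (Finset.mem_image_of_mem _ hx), ?_⟩
      simp only [ne_eq, inv_mul_eq_one]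
      exact fun hh => hxne hh.symm
    · push_neg at h
      obtain ⟨y, hy, hyne⟩ := h
      refine ⟨y * y₀⁻¹, Finset.mem_union_right _ (Finset.mem_image_of_mem _ hy), ?_⟩
      simp only [ne_eq, mul_inv_eq_one]
      exact hyne
  obtain ⟨g₀, hg₀mem, hg₀ne⟩ := hnt
  set H : Subgroup G := Subgroup.closure (↑(X₁ ∪ Y₁) : Set G) with hHdef
  have hmemH : ∀ g ∈ X₁ ∪ Y₁, g ∈ H := fun g hg => Subgroup.subset_closure hg
  have hHne : H ≠ ⊥ := by
    intro hbot
    have : g₀ ∈ (⊥ : Subgroup G) := hbot ▸ hmemH g₀ hg₀mem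
    exact hg₀ne (Subgroup.mem_bot.mp this)
  have hHfg : H.FG := by
    rw [Subgroup.fg_iff]
    exact ⟨↑(X₁ ∪ Y₁), rfl, Finset.finite_toSet _⟩
  obtain ⟨f, hf⟩ := hG H hHne hHfg
  -- the integer-valued weight function
  set ψ : G → ℤ := fun g => if hg : g ∈ H then Multiplicative.toAdd (f ⟨g, hg⟩) else 0 with hψdef
  have hψadd : ∀ a b : G, a ∈ H → b ∈ H → ψ (a * b) = ψ a + ψ b := by
    intro a b ha hb
    have hab : a * b ∈ H := mul_mem ha hb
    simp only [hψdef, dif_pos ha, dif_pos hb, dif_pos hab]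
    have : (⟨a * b, hab⟩ : H) = ⟨a, ha⟩ * ⟨b, hb⟩ := rfl
    rw [this, map_mul, toAdd_mul]
  have hψ1 : ψ 1 = 0 := by
    simp only [hψdef, dif_pos (one_mem H)]
    have : (⟨(1 : G), one_mem H⟩ : H) = 1 := rfl
    rw [this, map_one, toAdd_one]
  -- ψ is nonzero somewhere on the generators, since f is surjective
  have hψnt : ∃ g ∈ X₁ ∪ Y₁, ψ g ≠ 0 := by
    by_contra hco
    push_neg at hco
    have hker : ∀ g (hg : g ∈ H), f ⟨g, hg⟩ = 1 := by
      intro g hg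
      induction hg using Subgroup.closure_induction with
      | mem x hx =>
        have hxH : x ∈ H := Subgroup.subset_closure hx
        have h0 : ψ x = 0 := hco x hx
        simp only [hψdef] at h0
        rw [dif_pos hxH] at h0
        have h2 := congrArg Multiplicative.ofAdd h0
        simpa using h2
      | one =>
        have : (⟨(1 : G), one_mem H⟩ : H) = 1 := rfl
        rw [this, map_one]
      | mul x y hx hy ihx ihy =>
        have : (⟨x * y, mul_mem hx hy⟩ : H) = ⟨x, hx⟩ * ⟨y, hy⟩ := rfl
        rw [this, map_mul, ihx, ihy, mul_one]
      | inv x hx ihx =>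
        have : (⟨x⁻¹, inv_mem hx⟩ : H) = (⟨x, hx⟩ : H)⁻¹ := rfl
        rw [this, map_inv, ihx, inv_one]
    obtain ⟨z, hz⟩ := hf (Multiplicative.ofAdd 1)
    have := hker z.1 z.2
    rw [Subtype.coe_eta, hz] at this
    have h9 : (1 : ℤ) = 0 := by simpa using congrArg Multiplicative.toAdd this
    exact one_ne_zero h9
  obtain ⟨g₁, hg₁mem, hg₁ne⟩ := hψnt
  -- maximal-weight subsets
  have hX₁ne : X₁.Nonempty := ⟨1, h1X⟩
  have hY₁ne : Y₁.Nonempty := ⟨1, h1Y⟩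
  set M : ℤ := (X₁.image ψ).max' (hX₁ne.image ψ) with hMdef
  set N : ℤ := (Y₁.image ψ).max' (hY₁ne.image ψ) with hNdef
  set X' : Finset G := X₁.filter (fun g => ψ g = M) with hX'def
  set Y' : Finset G := Y₁.filter (fun g => ψ g = N) with hY'def
  have hX'ne : X'.Nonempty := by
    obtain ⟨x, hx, hxe⟩ := Finset.mem_image.mp ((X₁.image ψ).max'_mem (hX₁ne.image ψ))
    exact ⟨x, Finset.mem_filter.mpr ⟨hx, hxe⟩⟩
  have hY'ne : Y'.Nonempty := by
    obtain ⟨y, hy, hye⟩ := Finset.mem_image.mp ((Y₁.image ψ).max'_mem (hY₁ne.image ψ))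
    exact ⟨y, Finset.mem_filter.mpr ⟨hy, hye⟩⟩
  have hXle : ∀ x ∈ X₁, ψ x ≤ M := fun x hx =>
    (X₁.image ψ).le_max' _ (Finset.mem_image_of_mem ψ hx)
  have hYle : ∀ y ∈ Y₁, ψ y ≤ N := fun y hy =>
    (Y₁.image ψ).le_max' _ (Finset.mem_image_of_mem ψ hy)
  -- the card sum strictly decreases
  have hlt : X'.card + Y'.card < X₁.card + Y₁.card := by
    have hXsub := Finset.filter_subset (fun g => ψ g = M) X₁
    have hYsub := Finset.filter_subset (fun g => ψ g = N) Y₁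
    have hne : X' ≠ X₁ ∨ Y' ≠ Y₁ := by
      rcases Finset.mem_union.mp hg₁mem with hg | hg
      · left
        intro heq
        have h1 : ψ g₁ = M := (Finset.mem_filter.mp (show g₁ ∈ X' by rw [heq]; exact hg)).2
        have h2 : ψ (1 : G) = M := (Finset.mem_filter.mp (show (1:G) ∈ X' by rw [heq]; exact h1X)).2
        rw [hψ1] at h2
        exact hg₁ne (h1.trans h2.symm)
      · right
        intro heq
        have h1 : ψ g₁ = N := (Finset.mem_filter.mp (show g₁ ∈ Y' by rw [heq]; exact hg)).2
        have h2 : ψ (1 : G) = N := (Finset.mem_filter.mp (show (1:G) ∈ Y' by rw [heq]; exact h1Y)).2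
        rw [hψ1] at h2
        exact hg₁ne (h1.trans h2.symm)
    rcases hne with hne | hne
    · have : X'.card < X₁.card := Finset.card_lt_card (lt_of_le_of_ne hXsub hne)
      have h2 : Y'.card ≤ Y₁.card := Finset.card_le_card hYsub
      omega
    · have : Y'.card < Y₁.card := Finset.card_lt_card (lt_of_le_of_ne hYsub hne)
      have h2 : X'.card ≤ X₁.card := Finset.card_le_card hXsub
      omega
  -- apply the induction hypothesis
  have hsum : X'.card + Y'.card < n := by omega
  obtain ⟨x, hx, y, hy, huniq⟩ := ih (X'.card + Y'.card) hsum X' Y' hX'ne hY'ne le_rfl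
  have hxX₁ : x ∈ X₁ := (Finset.mem_filter.mp hx).1
  have hyY₁ : y ∈ Y₁ := (Finset.mem_filter.mp hy).1
  -- lift uniqueness to X₁, Y₁
  have huniq₁ : UniqueMul X₁ Y₁ x y := by
    intro x₁ y₁ hx₁ hy₁ he
    have hx₁H : x₁ ∈ H := hmemH _ (Finset.mem_union_left _ hx₁)
    have hy₁H : y₁ ∈ H := hmemH _ (Finset.mem_union_right _ hy₁)
    have hxH : x ∈ H := hmemH _ (Finset.mem_union_left _ hxX₁)
    have hyH : y ∈ H := hmemH _ (Finset.mem_union_right _ hyY₁)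
    have heq : ψ x₁ + ψ y₁ = ψ x + ψ y := by
      rw [← hψadd _ _ hx₁H hy₁H, ← hψadd _ _ hxH hyH, he]
    have hxM : ψ x = M := (Finset.mem_filter.mp hx).2
    have hyN : ψ y = N := (Finset.mem_filter.mp hy).2
    have h1 := hXle x₁ hx₁
    have h2 := hYle y₁ hy₁
    have hx₁M : ψ x₁ = M := by omega
    have hy₁N : ψ y₁ = N := by omega
    exact huniq (Finset.mem_filter.mpr ⟨hx₁, hx₁M⟩) (Finset.mem_filter.mpr ⟨hy₁, hy₁N⟩) he
  -- translate back
  obtain ⟨x', hx', hxeq⟩ := Finset.mem_image.mp hxX₁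
  obtain ⟨y', hy', hyeq⟩ := Finset.mem_image.mp hyY₁
  refine ⟨x', hx', y', hy', uniqueMul_transfer X Y x₀⁻¹ y₀⁻¹ x' y' ?_⟩
  rw [hxeq, hyeq]
  exact huniq₁

/-- Every locally indicable group has the unique product property. -/
theorem locallyIndicable_up {G : Type*} [Group G] (hG : LocallyIndicable G) :
    ∀ X Y : Finset G, X.Nonempty → Y.Nonempty →
      ∃ x ∈ X, ∃ y ∈ Y, UniqueMul X Y x y := by
  intro X Y hX hY
  exact key hG (X.card + Y.card) X Y hX hY le_rfl
end
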